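/- arXiv:1601.06462 — 4 statements merged into one kernel-verified Lean document; each statement's English description precedes it below -/
import Mathlib

section
/- Fix an integer n ≥ 4, set μ = (n−2+√(n²−4n))/2, and let s₁, s₂, s₃, … be a sequence of real numbers satisfying the characteristic recursion s_{j+1} = (n−2)s_j − s_{j−1} for all j ≥ 2. Then s₁ > 0 and μs₂ − s₁ ≥ 0 if and only if s_j > 0 for every j ≥ 1. -/
/-!
If `μ` is a root of `x² - a x + 1`, then for a solution `t` of `t (j+2) = a t (j+1) - t j` the
discrepancy `μ t (j+1) - t j` is multiplied by `μ` at each step. With `μ ≥ 1` a nonnegative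
discrepancy keeps `t (j+1) ≥ t j / μ > 0`, while a negative one makes `t` decrease at least
linearly, so `t` eventually becomes negative.
-/

section RecursiveSequence

variable {a μ : ℝ} {t : ℕ → ℝ}

lemma discrepancy_eq_pow_mul (hμ : μ ^ 2 = a * μ - 1) (ht : ∀ j, t (j + 2) = a * t (j + 1) - t j)
    (j : ℕ) : μ * t (j + 1) - t j = μ ^ j * (μ * t 1 - t 0) := by
  induction j with
  | zero => ring
  | succ j ih =>
    rw [ht, pow_succ, mul_comm (μ ^ j), mul_assoc, ← ih]
    linear_combination (-t (j + 1)) * hμ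

lemma pos_of_discrepancy_nonneg (hμ : μ ^ 2 = a * μ - 1) (hμ0 : 0 < μ)
    (ht : ∀ j, t (j + 2) = a * t (j + 1) - t j) (h0 : 0 < t 0) (hd : 0 ≤ μ * t 1 - t 0)
    (j : ℕ) : 0 < t j := by
  induction j with
  | zero => exact h0
  | succ j ih =>
    have hdj : 0 ≤ μ * t (j + 1) - t j := by
      rw [discrepancy_eq_pow_mul hμ ht]
      positivity
    exact pos_of_mul_pos_right (by linarith) hμ0.le

lemma le_add_mul_discrepancy (hμ : μ ^ 2 = a * μ - 1) (hμ1 : 1 ≤ μ)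
    (ht : ∀ j, t (j + 2) = a * t (j + 1) - t j) (hpos : ∀ j, 0 < t j)
    (hd : μ * t 1 - t 0 < 0) (j : ℕ) : t j ≤ t 0 + j * (μ * t 1 - t 0) := by
  induction j with
  | zero => simp
  | succ j ih =>
    have hstep : μ * t (j + 1) - t j ≤ μ * t 1 - t 0 := by
      rw [discrepancy_eq_pow_mul hμ ht]
      exact mul_le_of_one_le_left hd.le (one_le_pow₀ hμ1)
    have : t (j + 1) ≤ μ * t (j + 1) := le_mul_of_one_le_left (hpos _).le hμ1
    push_cast
    linarith

lemma discrepancy_nonneg_of_pos (hμ : μ ^ 2 = a * μ - 1) (hμ1 : 1 ≤ μ)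
    (ht : ∀ j, t (j + 2) = a * t (j + 1) - t j) (hpos : ∀ j, 0 < t j) :
    0 ≤ μ * t 1 - t 0 := by
  by_contra! hd
  obtain ⟨j, hj⟩ := exists_nat_gt (t 0 / -(μ * t 1 - t 0))
  have hj' : t 0 < j * -(μ * t 1 - t 0) := (div_lt_iff₀ (by linarith)).mp hj
  linarith [le_add_mul_discrepancy hμ hμ1 ht hpos hd j, hpos j]

theorem pos_iff_discrepancy_nonneg (hμ : μ ^ 2 = a * μ - 1) (hμ1 : 1 ≤ μ)
    (ht : ∀ j, t (j + 2) = a * t (j + 1) - t j) :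
    (0 < t 0 ∧ 0 ≤ μ * t 1 - t 0) ↔ ∀ j, 0 < t j :=
  ⟨fun ⟨h0, hd⟩ => pos_of_discrepancy_nonneg hμ (by linarith) ht h0 hd,
    fun hpos => ⟨hpos 0, discrepancy_nonneg_of_pos hμ hμ1 ht hpos⟩⟩

end RecursiveSequence

lemma one_le_and_sq_eq_of_four_le {n μ : ℝ} (hn : 4 ≤ n)
    (hμ : μ = (n - 2 + Real.sqrt (n ^ 2 - 4 * n)) / 2) :
    1 ≤ μ ∧ μ ^ 2 = (n - 2) * μ - 1 := by
  have hsq : Real.sqrt (n ^ 2 - 4 * n) ^ 2 = n ^ 2 - 4 * n := Real.sq_sqrt (by nlinarith)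
  have := Real.sqrt_nonneg (n ^ 2 - 4 * n)
  subst hμ
  constructor
  · linarith
  · linear_combination hsq / 4

/-- Fix an integer `n ≥ 4`, set `μ = (n−2+√(n²−4n))/2`, and let `s₁, s₂, …` be a
sequence of real numbers with `s_{j+1} = (n−2)s_j − s_{j−1}` for all `j ≥ 2`.
Then `s₁ > 0` and `μs₂ − s₁ ≥ 0` iff `s_j > 0` for every `j ≥ 1`. -/
theorem stmt_1 (n : ℤ) (hn : 4 ≤ n) (μ : ℝ)
    (hμ : μ = ((n : ℝ) - 2 + Real.sqrt ((n : ℝ) ^ 2 - 4 * (n : ℝ))) / 2)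
    (s : ℕ → ℝ)
    (hrec : ∀ j : ℕ, 2 ≤ j → s (j + 1) = ((n : ℝ) - 2) * s j - s (j - 1)) :
    (0 < s 1 ∧ 0 ≤ μ * s 2 - s 1) ↔ (∀ j : ℕ, 1 ≤ j → 0 < s j) := by
  obtain ⟨hμ1, hμsq⟩ := one_le_and_sq_eq_of_four_le (by exact_mod_cast hn) hμ
  have hshift : ∀ j, s (j + 1 + 2) = ((n : ℝ) - 2) * s (j + 1 + 1) - s (j + 1) :=
    fun j => hrec (j + 2) (by omega)
  refine (pos_iff_discrepancy_nonneg (t := fun j => s (j + 1)) hμsq hμ1 hshift).trans ⟨?_, ?_⟩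
  · intro h j hj
    obtain ⟨k, rfl⟩ := Nat.exists_eq_add_of_le' hj
    exact h k
  · exact fun h j => h (j + 1) (by omega)
end

section
/- Fix an integer n ≥ 4, set μ = (n−2+√(n²−4n))/2, and let s₁, s₂, s₃, … be a sequence of real numbers satisfying the characteristic recursion s_{j+1} = (n−2)s_j − s_{j−1} for all j ≥ 2. Then s₁ < 0 and μs₂ − s₁ ≤ 0 if and only if s_j < 0 for every j ≥ 1. -/
/-- Fix an integer `n ≥ 4`, set `μ = (n−2+√(n²−4n))/2`, and let `s₁, s₂, …` be a
sequence of real numbers with `s_{j+1} = (n−2)s_j − s_{j−1}` for all `j ≥ 2`.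
Then `s₁ < 0` and `μs₂ − s₁ ≤ 0` iff `s_j < 0` for every `j ≥ 1`. -/
theorem stmt_2 (n : ℤ) (hn : 4 ≤ n) (μ : ℝ)
    (hμ : μ = ((n : ℝ) - 2 + Real.sqrt ((n : ℝ) ^ 2 - 4 * (n : ℝ))) / 2)
    (s : ℕ → ℝ)
    (hrec : ∀ j : ℕ, 2 ≤ j → s (j + 1) = ((n : ℝ) - 2) * s j - s (j - 1)) :
    (s 1 < 0 ∧ μ * s 2 - s 1 ≤ 0) ↔ (∀ j : ℕ, 1 ≤ j → s j < 0) := by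
  have hN : (4:ℝ) ≤ (n:ℝ) := by exact_mod_cast hn
  set N := (n:ℝ) with hNdef
  have hnn : 0 ≤ N^2 - 4*N := by nlinarith
  have hr2 : Real.sqrt (N^2 - 4*N) ^ 2 = N^2 - 4*N := Real.sq_sqrt hnn
  have hr0 : 0 ≤ Real.sqrt (N^2 - 4*N) := Real.sqrt_nonneg _
  have hμ1 : 1 ≤ μ := by rw [hμ]; nlinarith
  have hμ0 : 0 < μ := lt_of_lt_of_le one_pos hμ1
  have hμq : μ^2 = (N-2)*μ - 1 := by rw [hμ]; nlinarith [hr2]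
  set t : ℕ → ℝ := fun j => μ * s (j+1) - s j with ht
  have hts : ∀ j : ℕ, 1 ≤ j → t (j+1) = μ * t j := by
    intro j hj
    have h := hrec (j+1) (by omega)
    have hsub : (j+1) - 1 = j := by omega
    rw [hsub] at h
    simp only [ht]
    rw [h]
    linear_combination (-(s (j+1))) * hμq
  have htf : ∀ j : ℕ, t (j+1) = μ^j * t 1 := by
    intro j; induction j with
    | zero => simp
    | succ k ih => rw [hts (k+1) (by omega), ih]; ring
  constructor
  · rintro ⟨hs1, ht1⟩
    have ht1' : t 1 ≤ 0 := ht1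
    have key : ∀ j : ℕ, s (j+1) < 0 := by
      intro j; induction j with
      | zero => exact hs1
      | succ k ih =>
        have htk : t (k+1) ≤ 0 := by
          rw [htf]
          exact mul_nonpos_iff.mpr (Or.inl ⟨pow_nonneg hμ0.le k, ht1'⟩)
        have hmu : μ * s (k+1+1) = s (k+1) + t (k+1) := by simp only [ht]; ring
        nlinarith
    intro j hj
    obtain ⟨k, rfl⟩ : ∃ k, j = k+1 := ⟨j-1, by omega⟩
    exact key k
  · intro h
    refine ⟨h 1 le_rfl, ?_⟩
    by_contra hpos
    push_neg at hpos
    have ht1 : 0 < t 1 := hpos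
    have grow : ∀ j : ℕ, s 1 + j * (t 1 / μ) ≤ s (j+1) := by
      intro j; induction j with
      | zero => simp
      | succ k ih =>
        have htk : t 1 ≤ t (k+1) := by
          rw [show t (k+1) = μ^k * t 1 from htf k]
          nlinarith [one_le_pow₀ hμ1 (n := k), ht1]
        have hsk : s (k+1) < 0 := h (k+1) (by omega)
        have hmu : μ * s (k+1+1) = s (k+1) + t (k+1) := by simp only [ht]; ring
        have hcan : μ * (t 1 / μ) = t 1 := mul_div_cancel₀ (t 1) hμ0.ne'
        have hstep : s (k+1) + t 1 / μ ≤ s (k+1+1) := by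
          have hle : μ * (s (k+1) + t 1 / μ) ≤ μ * s (k+1+1) := by
            rw [hmu, mul_add, hcan]
            nlinarith [mul_nonneg (sub_nonneg.mpr hμ1) (neg_nonneg.mpr hsk.le)]
          exact le_of_mul_le_mul_left hle hμ0
        push_cast
        nlinarith [hstep, ih]
    obtain ⟨m, hm⟩ := exists_nat_ge ((-s 1) * μ / t 1)
    have hgm := grow m
    have hsm : s (m+1) < 0 := h (m+1) (by omega)
    have hd : 0 < t 1 / μ := div_pos ht1 hμ0
    have hcan2 : (-s 1) * μ / t 1 * t 1 = (-s 1) * μ := div_mul_cancel₀ _ ht1.ne'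
    have hmt : (m : ℝ) * (t 1 / μ) * μ = (m : ℝ) * t 1 := by field_simp
    have h1 : (m : ℝ) * (t 1 / μ) < -s 1 := by linarith
    have h2 := mul_lt_mul_of_pos_right h1 hμ0
    rw [hmt] at h2
    have h3 := mul_le_mul_of_nonneg_right hm ht1.le
    rw [hcan2] at h3
    linarith
end

section
/- Fix an integer n ≥ 4 and let s₁, s₂, s₃, … be a sequence of real numbers satisfying the characteristic recursion s_{j+1} = (n−2)s_j − s_{j−1} for all j ≥ 2. Then the sequence changes sign at most once: there do not exist indices j₁ < j₂ < j₃ with s_{j₁} > 0, s_{j₂} < 0 and s_{j₃} > 0, and there do not exist indices j₁ < j₂ < j₃ with s_{j₁} < 0, s_{j₂} > 0 and s_{j₃} < 0. -/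
/-!
With `c = n - 2 ≥ 2`, once the sequence drops from `s m ≥ 0` to `s (m + 1) < 0` it stays negative:
if `s (k + 1) ≤ s k` and `s (k + 1) < 0`, then
`s (k + 2) = c s (k + 1) - s k ≤ (c - 1) s (k + 1) ≤ s (k + 1)`.
So a sign change from positive to negative is final; applying this to `-s` handles the other pattern.
-/

lemma Nat.exists_between_not_and_succ {p : ℕ → Prop} {a b : ℕ} (hab : a ≤ b) (ha : ¬ p a)
    (hb : p b) : ∃ m, a ≤ m ∧ m < b ∧ ¬ p m ∧ p (m + 1) := by
  induction b, hab using Nat.le_induction with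
  | base => exact absurd hb ha
  | succ b hab ih =>
    by_cases hpb : p b
    · obtain ⟨m, ham, hmb, hm, hm'⟩ := ih hpb
      exact ⟨m, ham, by omega, hm, hm'⟩
    · exact ⟨b, hab, by omega, hpb, hb⟩

section SignChange

variable {c : ℝ} {s : ℕ → ℝ}

lemma le_and_neg_of_le_of_neg (hc : 2 ≤ c)
    (hrec : ∀ j : ℕ, 2 ≤ j → s (j + 1) = c * s j - s (j - 1))
    {m : ℕ} (hm : 1 ≤ m) (hdrop : s (m + 1) ≤ s m) (hneg : s (m + 1) < 0) :
    ∀ k, m ≤ k → s (k + 1) ≤ s k ∧ s (k + 1) < 0 := by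
  intro k hk
  induction k, hk using Nat.le_induction with
  | base => exact ⟨hdrop, hneg⟩
  | succ k hk ih =>
    obtain ⟨hle, hlt⟩ := ih
    have hstep : s (k + 2) = c * s (k + 1) - s k := hrec (k + 1) (by omega)
    have hle' : s (k + 2) ≤ s (k + 1) := by rw [hstep]; nlinarith
    exact ⟨hle', hle'.trans_lt hlt⟩

lemma not_exists_pos_neg_pos (hc : 2 ≤ c)
    (hrec : ∀ j : ℕ, 2 ≤ j → s (j + 1) = c * s j - s (j - 1)) :
    ¬ ∃ j₁ j₂ j₃ : ℕ, 1 ≤ j₁ ∧ j₁ < j₂ ∧ j₂ < j₃ ∧ 0 < s j₁ ∧ s j₂ < 0 ∧ 0 < s j₃ := by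
  rintro ⟨j₁, j₂, j₃, h1, h12, h23, hpos₁, hneg₂, hpos₃⟩
  obtain ⟨m, hm₁, hm₂, hm, hm'⟩ :=
    Nat.exists_between_not_and_succ (p := fun k ↦ s k < 0) h12.le hpos₁.not_gt hneg₂
  have hdrop : s (m + 1) ≤ s m := by linarith [not_lt.1 hm]
  have hneg₃ := (le_and_neg_of_le_of_neg hc hrec (by omega) hdrop hm' (j₃ - 1) (by omega)).2
  rw [Nat.sub_add_cancel (by omega)] at hneg₃
  linarith

end SignChange

/-- Fix an integer `n ≥ 4` and let `s₁, s₂, …` satisfy `s_{j+1} = (n−2)s_j − s_{j−1}`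
for all `j ≥ 2`. Then the sequence changes sign at most once: there are no indices
`j₁ < j₂ < j₃` (all `≥ 1`) with `s_{j₁} > 0`, `s_{j₂} < 0`, `s_{j₃} > 0`, and none
with `s_{j₁} < 0`, `s_{j₂} > 0`, `s_{j₃} < 0`. -/
theorem stmt_5 (n : ℤ) (hn : 4 ≤ n) (s : ℕ → ℝ)
    (hrec : ∀ j : ℕ, 2 ≤ j → s (j + 1) = ((n : ℝ) - 2) * s j - s (j - 1)) :
    (¬ ∃ j₁ j₂ j₃ : ℕ, 1 ≤ j₁ ∧ j₁ < j₂ ∧ j₂ < j₃ ∧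
        0 < s j₁ ∧ s j₂ < 0 ∧ 0 < s j₃) ∧
    (¬ ∃ j₁ j₂ j₃ : ℕ, 1 ≤ j₁ ∧ j₁ < j₂ ∧ j₂ < j₃ ∧
        s j₁ < 0 ∧ 0 < s j₂ ∧ s j₃ < 0) := by
  have hc : (2 : ℝ) ≤ (n : ℝ) - 2 := by
    have : (4 : ℝ) ≤ n := by exact_mod_cast hn
    linarith
  refine ⟨not_exists_pos_neg_pos hc hrec, ?_⟩
  rintro ⟨j₁, j₂, j₃, h1, h12, h23, hneg₁, hpos₂, hneg₃⟩
  refine not_exists_pos_neg_pos (s := fun j ↦ -s j) hc (fun j hj ↦ ?_)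
    ⟨j₁, j₂, j₃, h1, h12, h23, neg_pos.2 hneg₁, neg_lt_zero.2 hpos₂, neg_pos.2 hneg₃⟩
  simp only [hrec j hj]
  ring
end

section
/- Fix an integer n ≥ 4 and let s₁, s₂, s₃, … be a sequence of real numbers satisfying the characteristic recursion s_{j+1} = (n−2)s_j − s_{j−1} for all j ≥ 2. If the sequence is not identically zero (equivalently (s₁, s₂) ≠ (0,0)), then there is at most one index j ≥ 1 with s_j = 0. -/
private lemma aux_pos (c : ℝ) (hc : 2 ≤ c) (s : ℕ → ℝ)
    (hrec : ∀ m : ℕ, 2 ≤ m → s (m + 1) = c * s m - s (m - 1))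
    (j : ℕ) (hj : 1 ≤ j) (h0 : s j = 0) (h1 : 0 < s (j + 1)) :
    ∀ k : ℕ, 0 < s (j + k + 1) := by
  have key : ∀ k : ℕ, 0 ≤ s (j + k) ∧ s (j + k) < s (j + k + 1) := by
    intro k
    induction k with
    | zero =>
      simp only [Nat.add_zero]
      exact ⟨le_of_eq h0.symm, by rw [h0]; exact h1⟩
    | succ k ih =>
      obtain ⟨ha, hb⟩ := ih
      have hm : 2 ≤ j + k + 1 := by omega
      have hr := hrec (j + k + 1) hm
      simp only [Nat.add_sub_cancel] at hr
      have hx : 0 < s (j + k + 1) := lt_of_le_of_lt ha hb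
      have h2x : 2 * s (j + k + 1) ≤ c * s (j + k + 1) :=
        mul_le_mul_of_nonneg_right hc hx.le
      constructor
      · show 0 ≤ s (j + (k + 1)); have : j + (k + 1) = j + k + 1 := by omega
        rw [this]; exact hx.le
      · have : j + (k + 1) = j + k + 1 := by omega
        rw [this, hr]; linarith
  intro k
  have := key k
  linarith [this.1, this.2]

private lemma aux_ne (c : ℝ) (hc : 2 ≤ c) (s : ℕ → ℝ)
    (hrec : ∀ m : ℕ, 2 ≤ m → s (m + 1) = c * s m - s (m - 1))
    (j : ℕ) (hj : 1 ≤ j) (h0 : s j = 0) (h1 : s (j + 1) ≠ 0) :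
    ∀ k : ℕ, s (j + k + 1) ≠ 0 := by
  rcases lt_or_gt_of_ne h1 with h | h
  · have hrec' : ∀ m : ℕ, 2 ≤ m → (-s ·) (m + 1) = c * (-s ·) m - (-s ·) (m - 1) := by
      intro m hm; simp [hrec m hm]; ring
    have := aux_pos c hc (fun m => -s m) hrec' j hj (by simp [h0]) (by simpa using h)
    intro k hk
    have := this k
    simp [hk] at this
  · intro k hk
    have := aux_pos c hc s hrec j hj h0 h k
    exact absurd hk (ne_of_gt this)

private lemma aux_zero (c : ℝ) (s : ℕ → ℝ)
    (hrec : ∀ m : ℕ, 2 ≤ m → s (m + 1) = c * s m - s (m - 1)) :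
    ∀ j : ℕ, 1 ≤ j → s j = 0 → s (j + 1) = 0 → s 1 = 0 ∧ s 2 = 0 := by
  intro j
  induction j using Nat.strong_induction_on with
  | _ j ih =>
    intro h1 h0 h0'
    rcases Nat.lt_or_ge j 2 with h | h
    · interval_cases j
      exact ⟨h0, h0'⟩
    · have hr := hrec j h
      have hprev : s (j - 1) = 0 := by
        rw [h0, h0'] at hr; linarith
      have hnext : s ((j - 1) + 1) = 0 := by
        have : j - 1 + 1 = j := by omega
        rw [this]; exact h0
      exact ih (j - 1) (by omega) (by omega) hprev hnext

/-- Fix an integer `n ≥ 4` and let `s₁, s₂, …` satisfy `s_{j+1} = (n−2)s_j − s_{j−1}`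
for all `j ≥ 2`. If `(s₁, s₂) ≠ (0, 0)` then there is at most one index `j ≥ 1`
with `s_j = 0`. -/
theorem stmt_6 (n : ℤ) (hn : 4 ≤ n) (s : ℕ → ℝ)
    (hrec : ∀ j : ℕ, 2 ≤ j → s (j + 1) = ((n : ℝ) - 2) * s j - s (j - 1))
    (hne : (s 1, s 2) ≠ (0, 0)) :
    ∀ j₁ j₂ : ℕ, 1 ≤ j₁ → 1 ≤ j₂ → s j₁ = 0 → s j₂ = 0 → j₁ = j₂ := by
  set c : ℝ := (n : ℝ) - 2 with hc_def
  have hc : 2 ≤ c := by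
    have : (4 : ℝ) ≤ (n : ℝ) := by exact_mod_cast hn
    simp [hc_def]; linarith
  have main : ∀ a b : ℕ, 1 ≤ a → a < b → s a = 0 → s b = 0 → False := by
    intro a b ha hab h0 h0'
    by_cases hnext : s (a + 1) = 0
    · have := aux_zero c s hrec a ha h0 hnext
      exact hne (by simp [this.1, this.2])
    · have := aux_ne c hc s hrec a ha h0 hnext (b - a - 1)
      have hb : a + (b - a - 1) + 1 = b := by omega
      rw [hb] at this
      exact this h0'
  intro j₁ j₂ h1 h2 z1 z2
  rcases lt_trichotomy j₁ j₂ with h | h | h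
  · exact absurd (main j₁ j₂ h1 h z1 z2) (by simp)
  · exact h
  · exact absurd (main j₂ j₁ h2 h z2 z1) (by simp)
end
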